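/- Let n ≥ 1, m ≥ 1 with m < n, and m/2 < α < n/2. Iterating the codimension-one trace inequality m times yields: for F : ℝⁿ → ℂ with ∫|F(k)|²(2π|k|)^{2α} dk < ∞, writing k = (k₁,k₂) ∈ ℝ^{n−m} × ℝ^m and G(k₁) := ∫_{ℝ^m} F(k₁,k₂) dk₂, one has ∫_{ℝ^{n−m}} |G(k₁)|² (2π|k₁|)^{2α−m} dk₁ ≤ (1/(2^m π^{m/2})) · (Γ(α − m/2)/Γ(α)) · ∫_{ℝⁿ} |F(k)|² (2π|k|)^{2α} dk. -/

import Mathlib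

/-!
Fix `k₁ ≠ 0`. Cauchy–Schwarz with the weight `W(k₂) = (2π √(|k₁|² + |k₂|²))^{2α}` bounds
`|∫ F(k₁, ·)|²` by `∫ |F(k₁, ·)|² W` times `∫ W⁻¹`. Subordinating to Gaussians,
`(c + |y|²)^{-α} = Γ(α)⁻¹ ∫₀^∞ t^{α-1} e^{-(c + |y|²) t} dt`, gives
`∫_{ℝ^m} (c + |y|²)^{-α} dy = π^{m/2} Γ(α - m/2) / Γ(α) · c^{m/2 - α}`, and with `c = |k₁|²` the
power of `|k₁|` cancels the weight `(2π |k₁|)^{2α - m}` exactly. Integrating in `k₁` (Tonelli)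
yields the inequality.
-/

open MeasureTheory Real Set
open scoped ENNReal

theorem lintegral_rpow_mul_exp_neg_mul_Ioi {a r : ℝ} (ha : 0 < a) (hr : 0 < r) :
    ∫⁻ t in Ioi (0 : ℝ), ENNReal.ofReal (t ^ (a - 1) * exp (-(r * t))) =
      ENNReal.ofReal (Gamma a * r ^ (-a)) := by
  have hint := integral_rpow_mul_exp_neg_mul_Ioi ha hr
  rw [← ofReal_integral_eq_lintegral_ofReal
      (Integrable.of_integral_ne_zero (by rw [hint]; positivity))
      ((ae_restrict_mem measurableSet_Ioi).mono fun t (ht : 0 < t) => by positivity),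
    hint, one_div, inv_rpow hr.le, rpow_neg hr.le, mul_comm]

theorem ofReal_rpow_neg_eq_lintegral {a r : ℝ} (ha : 0 < a) (hr : 0 < r) :
    ENNReal.ofReal (r ^ (-a)) =
      (ENNReal.ofReal (Gamma a))⁻¹ *
        ∫⁻ t in Ioi (0 : ℝ), ENNReal.ofReal (t ^ (a - 1) * exp (-(r * t))) := by
  rw [lintegral_rpow_mul_exp_neg_mul_Ioi ha hr, ENNReal.ofReal_mul (Gamma_pos_of_pos ha).le,
    ENNReal.inv_mul_cancel_left (by simpa using Gamma_pos_of_pos ha) ENNReal.ofReal_ne_top]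

theorem enorm_integral_sq_le_lintegral_mul_lintegral_inv {X E : Type*} [MeasurableSpace X]
    {μ : Measure X} [NormedAddCommGroup E] [NormedSpace ℝ E] {f : X → E}
    (hf : AEStronglyMeasurable f μ) {w : X → ℝ≥0∞} (hw : AEMeasurable w μ)
    (hw0 : ∀ x, w x ≠ 0) (hw_top : ∀ x, w x ≠ ∞) :
    ‖∫ x, f x ∂μ‖ₑ ^ 2 ≤ (∫⁻ x, ‖f x‖ₑ ^ 2 * w x ∂μ) * ∫⁻ x, (w x)⁻¹ ∂μ := by
  have hsplit : ∀ x, ‖f x‖ₑ = (‖f x‖ₑ ^ 2 * w x) ^ (2⁻¹ : ℝ) * (w x)⁻¹ ^ (2⁻¹ : ℝ) := by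
    intro x
    rw [← ENNReal.mul_rpow_of_nonneg _ _ (by norm_num), mul_assoc,
      ENNReal.mul_inv_cancel (hw0 x) (hw_top x), mul_one, ← ENNReal.rpow_natCast,
      ← ENNReal.rpow_mul]
    norm_num
  calc ‖∫ x, f x ∂μ‖ₑ ^ 2 ≤ (∫⁻ x, ‖f x‖ₑ ∂μ) ^ 2 := by
        gcongr
        exact enorm_integral_le_lintegral_enorm f
    _ = (∫⁻ x, (‖f x‖ₑ ^ 2 * w x) ^ (2⁻¹ : ℝ) * (w x)⁻¹ ^ (2⁻¹ : ℝ) ∂μ) ^ 2 := by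
        rw [lintegral_congr hsplit]
    _ ≤ ((∫⁻ x, ‖f x‖ₑ ^ 2 * w x ∂μ) ^ (2⁻¹ : ℝ) * (∫⁻ x, (w x)⁻¹ ∂μ) ^ (2⁻¹ : ℝ)) ^ 2 := by
        gcongr
        exact ENNReal.lintegral_mul_norm_pow_le ((hf.enorm.pow_const 2).mul hw) hw.inv
          (by norm_num) (by norm_num) (by norm_num)
    _ = _ := by
        rw [mul_pow, ← ENNReal.rpow_natCast, ← ENNReal.rpow_natCast, ← ENNReal.rpow_mul,
          ← ENNReal.rpow_mul]
        norm_num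

noncomputable def traceConst (d : ℕ) (α : ℝ) : ℝ :=
  1 / (2 ^ d * π ^ ((d : ℝ) / 2)) * (Gamma (α - d / 2) / Gamma α)

theorem traceConst_pos {d : ℕ} {α : ℝ} (hα : (d : ℝ) / 2 < α) : 0 < traceConst d α := by
  have := Gamma_pos_of_pos (sub_pos.2 hα)
  have := Gamma_pos_of_pos ((by positivity : (0 : ℝ) ≤ d / 2).trans_lt hα)
  unfold traceConst
  positivity

theorem two_pi_rpow_mul_rpow_eq_traceConst (d : ℕ) {α a : ℝ} (ha : 0 < a) :
    (2 * π) ^ (-(2 * α)) * (π ^ ((d : ℝ) / 2) * (Gamma (α - d / 2) / Gamma α) *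
      (a ^ 2) ^ ((d : ℝ) / 2 - α)) * (2 * π * a) ^ (2 * α - d) = traceConst d α := by
  have h2π : 0 < 2 * π := by positivity
  have h2π_pow : (2 * π) ^ (-(2 * α)) * (2 * π) ^ (2 * α - d) = ((2 * π) ^ (d : ℝ))⁻¹ := by
    rw [← rpow_add h2π, ← rpow_neg h2π.le]
    ring_nf
  have ha_pow : a ^ (2 * ((d : ℝ) / 2 - α)) * a ^ (2 * α - d) = 1 := by
    rw [← rpow_add ha]
    ring_nf
    exact rpow_zero a
  have hπ : π ^ (d : ℝ) = π ^ ((d : ℝ) / 2) * π ^ ((d : ℝ) / 2) := by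
    rw [← rpow_add pi_pos, add_halves]
  rw [mul_rpow h2π.le ha.le, ← rpow_two, ← rpow_mul ha.le]
  calc _ = ((2 * π) ^ (-(2 * α)) * (2 * π) ^ (2 * α - d)) *
        (a ^ (2 * ((d : ℝ) / 2 - α)) * a ^ (2 * α - d)) * π ^ ((d : ℝ) / 2) *
          (Gamma (α - d / 2) / Gamma α) := by ring
    _ = _ := by
      rw [h2π_pow, ha_pow, mul_rpow zero_le_two pi_pos.le, hπ, rpow_natCast, traceConst]
      field_simp

section InnerProductSpace

variable {V : Type*} [NormedAddCommGroup V] [InnerProductSpace ℝ V] [FiniteDimensional ℝ V]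
  [MeasurableSpace V] [BorelSpace V] {E : Type*} [NormedAddCommGroup E] [NormedSpace ℝ E]

theorem lintegral_exp_neg_mul_norm_sq {t : ℝ} (ht : 0 < t) :
    ∫⁻ v : V, ENNReal.ofReal (exp (-t * ‖v‖ ^ 2)) =
      ENNReal.ofReal ((π / t) ^ (Module.finrank ℝ V / 2 : ℝ)) := by
  have hint := GaussianFourier.integral_rexp_neg_mul_sq_norm (V := V) ht
  rw [← ofReal_integral_eq_lintegral_ofReal
      (Integrable.of_integral_ne_zero (by rw [hint]; positivity))
      (Filter.Eventually.of_forall fun v => (exp_pos _).le), hint]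

theorem lintegral_rpow_neg_add_norm_sq {α c : ℝ} (hα : Module.finrank ℝ V / 2 < α)
    (hc : 0 < c) :
    ∫⁻ y : V, ENNReal.ofReal ((c + ‖y‖ ^ 2) ^ (-α)) =
      ENNReal.ofReal (π ^ (Module.finrank ℝ V / 2 : ℝ) *
        (Gamma (α - Module.finrank ℝ V / 2) / Gamma α) *
          c ^ (Module.finrank ℝ V / 2 - α)) := by
  set d : ℝ := Module.finrank ℝ V / 2 with hd
  have hd0 : 0 ≤ d := by positivity
  have hα0 : 0 < α := hd0.trans_lt hα
  have hαd : 0 < α - d := by linarith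
  have gaussian_slice : ∀ t ∈ Ioi (0 : ℝ),
      ∫⁻ y : V, ENNReal.ofReal (t ^ (α - 1) * exp (-((c + ‖y‖ ^ 2) * t))) =
        ENNReal.ofReal (π ^ d) * ENNReal.ofReal (t ^ (α - d - 1) * exp (-(c * t))) := by
    intro t (ht : 0 < t)
    have hsplit : ∀ y : V, t ^ (α - 1) * exp (-((c + ‖y‖ ^ 2) * t)) =
        t ^ (α - 1) * exp (-(c * t)) * exp (-t * ‖y‖ ^ 2) := by
      intro y
      rw [mul_assoc, ← exp_add]
      ring_nf
    simp_rw [hsplit, ENNReal.ofReal_mul (by positivity : 0 ≤ t ^ (α - 1) * exp (-(c * t)))]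
    rw [lintegral_const_mul' _ _ ENNReal.ofReal_ne_top, lintegral_exp_neg_mul_norm_sq ht, ← hd,
      ← ENNReal.ofReal_mul (by positivity), ← ENNReal.ofReal_mul (by positivity)]
    congr 1
    rw [div_rpow pi_nonneg ht.le, show α - d - 1 = (α - 1) + -d by ring, rpow_add ht,
      rpow_neg ht.le]
    field_simp
  have hmeas : AEMeasurable (Function.uncurry fun (y : V) (t : ℝ) =>
      ENNReal.ofReal (t ^ (α - 1) * exp (-((c + ‖y‖ ^ 2) * t))))
      ((volume : Measure V).prod (volume.restrict (Ioi (0 : ℝ)))) := by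
    apply Measurable.aemeasurable
    fun_prop
  calc ∫⁻ y : V, ENNReal.ofReal ((c + ‖y‖ ^ 2) ^ (-α))
      = ∫⁻ y : V, (ENNReal.ofReal (Gamma α))⁻¹ * ∫⁻ t in Ioi (0 : ℝ),
          ENNReal.ofReal (t ^ (α - 1) * exp (-((c + ‖y‖ ^ 2) * t))) :=
        lintegral_congr fun y => ofReal_rpow_neg_eq_lintegral hα0 (by positivity)
    _ = (ENNReal.ofReal (Gamma α))⁻¹ * ∫⁻ t in Ioi (0 : ℝ),
          ENNReal.ofReal (π ^ d) * ENNReal.ofReal (t ^ (α - d - 1) * exp (-(c * t))) := by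
        rw [lintegral_const_mul' _ _ (by simpa using Gamma_pos_of_pos hα0),
          lintegral_lintegral_swap hmeas, setLIntegral_congr_fun measurableSet_Ioi gaussian_slice]
    _ = _ := by
        rw [lintegral_const_mul' _ _ ENNReal.ofReal_ne_top,
          show α - d - 1 = (α - d) - 1 by ring, lintegral_rpow_mul_exp_neg_mul_Ioi hαd hc,
          ← ENNReal.ofReal_mul (by positivity),
          ← ENNReal.ofReal_inv_of_pos (Gamma_pos_of_pos hα0), ← ENNReal.ofReal_mul (by positivity),
          neg_sub]
        congr 1
        field_simp

theorem lintegral_inv_weight_mul_eq_traceConst {α a : ℝ} (hα : Module.finrank ℝ V / 2 < α)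
    (ha : 0 < a) :
    (∫⁻ y : V, (ENNReal.ofReal ((2 * π * √(a ^ 2 + ‖y‖ ^ 2)) ^ (2 * α)))⁻¹) *
        ENNReal.ofReal ((2 * π * a) ^ (2 * α - Module.finrank ℝ V)) =
      ENNReal.ofReal (traceConst (Module.finrank ℝ V) α) := by
  have h2π : 0 < 2 * π := by positivity
  have hweight : ∀ y : V, (ENNReal.ofReal ((2 * π * √(a ^ 2 + ‖y‖ ^ 2)) ^ (2 * α)))⁻¹ =
      ENNReal.ofReal ((2 * π) ^ (-(2 * α))) * ENNReal.ofReal ((a ^ 2 + ‖y‖ ^ 2) ^ (-α)) := by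
    intro y
    have hr : 0 < a ^ 2 + ‖y‖ ^ 2 := by positivity
    rw [← ENNReal.ofReal_inv_of_pos (by positivity), ← ENNReal.ofReal_mul (by positivity),
      mul_rpow h2π.le (sqrt_nonneg _), sqrt_eq_rpow, ← rpow_mul hr.le, rpow_neg h2π.le,
      rpow_neg hr.le, mul_inv, show 1 / 2 * (2 * α) = α by ring]
  simp_rw [hweight]
  rw [lintegral_const_mul' _ _ ENNReal.ofReal_ne_top,
    lintegral_rpow_neg_add_norm_sq hα (by positivity), ← ENNReal.ofReal_mul (by positivity),
    ← ENNReal.ofReal_mul' (by positivity), two_pi_rpow_mul_rpow_eq_traceConst _ ha]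

theorem ofReal_norm_integral_sq_mul_le {f : V → E} (hf : AEStronglyMeasurable f)
    {α a : ℝ} (hα : Module.finrank ℝ V / 2 < α) (ha : 0 ≤ a) :
    ENNReal.ofReal (‖∫ y, f y‖ ^ 2 * (2 * π * a) ^ (2 * α - Module.finrank ℝ V)) ≤
      ENNReal.ofReal (traceConst (Module.finrank ℝ V) α) *
        ∫⁻ y, ENNReal.ofReal (‖f y‖ ^ 2 * (2 * π * √(a ^ 2 + ‖y‖ ^ 2)) ^ (2 * α)) := by
  obtain rfl | ha := ha.eq_or_lt
  · rw [mul_zero, zero_rpow (by linarith), mul_zero, ENNReal.ofReal_zero]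
    exact bot_le
  set w : V → ℝ≥0∞ := fun y => ENNReal.ofReal ((2 * π * √(a ^ 2 + ‖y‖ ^ 2)) ^ (2 * α))
  have hw_pos : ∀ y : V, 0 < (2 * π * √(a ^ 2 + ‖y‖ ^ 2)) ^ (2 * α) := fun y => by positivity
  calc ENNReal.ofReal (‖∫ y, f y‖ ^ 2 * (2 * π * a) ^ (2 * α - Module.finrank ℝ V))
      = ‖∫ y, f y‖ₑ ^ 2 * ENNReal.ofReal ((2 * π * a) ^ (2 * α - Module.finrank ℝ V)) := by
        rw [ENNReal.ofReal_mul (by positivity), ENNReal.ofReal_pow (norm_nonneg _), ofReal_norm]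
    _ ≤ (∫⁻ y, ‖f y‖ₑ ^ 2 * w y) * (∫⁻ y, (w y)⁻¹) *
          ENNReal.ofReal ((2 * π * a) ^ (2 * α - Module.finrank ℝ V)) := by
        gcongr
        exact enorm_integral_sq_le_lintegral_mul_lintegral_inv hf (by fun_prop)
          (fun y => ENNReal.ofReal_pos.2 (hw_pos y) |>.ne') fun _ => ENNReal.ofReal_ne_top
    _ = _ := by
        rw [mul_assoc, lintegral_inv_weight_mul_eq_traceConst hα ha, mul_comm]
        congr 1
        refine lintegral_congr fun y => ?_
        rw [ENNReal.ofReal_mul (by positivity), ENNReal.ofReal_pow (norm_nonneg _), ofReal_norm]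

end InnerProductSpace

theorem fourier_trace_inequality_codim_general (p q : ℕ) (α : ℝ)
    (hα1 : (q : ℝ)/2 < α)
    (F : EuclideanSpace ℝ (Fin p) × EuclideanSpace ℝ (Fin q) → ℂ) (hF : Measurable F)
    (hint : Integrable (fun k : EuclideanSpace ℝ (Fin p) × EuclideanSpace ℝ (Fin q) =>
      ‖F k‖ ^ 2 * (2 * π * Real.sqrt (‖k.1‖ ^ 2 + ‖k.2‖ ^ 2)) ^ (2 * α))) :
    ∫ k₁ : EuclideanSpace ℝ (Fin p),
        ‖∫ k₂ : EuclideanSpace ℝ (Fin q), F (k₁, k₂)‖ ^ 2 * (2 * π * ‖k₁‖) ^ (2 * α - q) ≤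
      (1 / (2 ^ q * π ^ ((q : ℝ)/2))) * (Real.Gamma (α - q/2) / Real.Gamma α) *
        ∫ k : EuclideanSpace ℝ (Fin p) × EuclideanSpace ℝ (Fin q),
          ‖F k‖ ^ 2 * (2 * π * Real.sqrt (‖k.1‖ ^ 2 + ‖k.2‖ ^ 2)) ^ (2 * α) := by
  have hslice (k₁ : EuclideanSpace ℝ (Fin p)) :=
    ofReal_norm_integral_sq_mul_le (f := fun k₂ : EuclideanSpace ℝ (Fin q) => F (k₁, k₂))
      (hF.comp measurable_prodMk_left).aestronglyMeasurable
      (by rwa [finrank_euclideanSpace_fin]) (norm_nonneg k₁)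
  simp only [finrank_euclideanSpace_fin] at hslice
  have hlintegral : ∫⁻ k₁, ENNReal.ofReal
      (‖∫ k₂, F (k₁, k₂)‖ ^ 2 * (2 * π * ‖k₁‖) ^ (2 * α - q)) ≤
      ENNReal.ofReal (traceConst q α * ∫ k, ‖F k‖ ^ 2 *
        (2 * π * √(‖k.1‖ ^ 2 + ‖k.2‖ ^ 2)) ^ (2 * α)) := by
    calc _ ≤ ∫⁻ k₁, ENNReal.ofReal (traceConst q α) * ∫⁻ k₂, ENNReal.ofReal
          (‖F (k₁, k₂)‖ ^ 2 * (2 * π * √(‖k₁‖ ^ 2 + ‖k₂‖ ^ 2)) ^ (2 * α)) := lintegral_mono hslice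
      _ = _ := by
        rw [lintegral_const_mul' _ _ ENNReal.ofReal_ne_top,
          ← lintegral_prod _ hint.aestronglyMeasurable.aemeasurable.ennreal_ofReal,
          ← Measure.volume_eq_prod,
          ← ofReal_integral_eq_lintegral_ofReal hint (ae_of_all _ fun k => by positivity),
          ← ENNReal.ofReal_mul (traceConst_pos hα1).le]
  have hmeas : AEStronglyMeasurable fun k₁ : EuclideanSpace ℝ (Fin p) =>
      ‖∫ k₂, F (k₁, k₂)‖ ^ 2 * (2 * π * ‖k₁‖) ^ (2 * α - q) :=
    (hF.stronglyMeasurable.integral_prod_right'.measurable.norm.pow_const 2).mul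
      (by fun_prop) |>.aestronglyMeasurable
  rw [integral_eq_lintegral_of_nonneg_ae (ae_of_all _ fun k₁ => by positivity) hmeas]
  exact ENNReal.toReal_le_of_le_ofReal
    (mul_nonneg (traceConst_pos hα1).le (integral_nonneg fun k => by positivity)) hlintegral

/-- Fourier-side codimension-`q` trace inequality, obtained by iterating the
codimension-one inequality (here `n = p + q` is the total dimension, `q = m`
the codimension). -/
theorem fourier_trace_inequality_codim (p q : ℕ) (hp : 1 ≤ p) (hq : 1 ≤ q) (α : ℝ)
    (hα1 : (q : ℝ)/2 < α) (hα2 : α < ((p : ℝ) + q)/2)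
    (F : EuclideanSpace ℝ (Fin p) × EuclideanSpace ℝ (Fin q) → ℂ) (hF : Measurable F)
    (hint : Integrable (fun k : EuclideanSpace ℝ (Fin p) × EuclideanSpace ℝ (Fin q) =>
      ‖F k‖ ^ 2 * (2 * π * Real.sqrt (‖k.1‖ ^ 2 + ‖k.2‖ ^ 2)) ^ (2 * α))) :
    ∫ k₁ : EuclideanSpace ℝ (Fin p),
        ‖∫ k₂ : EuclideanSpace ℝ (Fin q), F (k₁, k₂)‖ ^ 2 * (2 * π * ‖k₁‖) ^ (2 * α - q) ≤
      (1 / (2 ^ q * π ^ ((q : ℝ)/2))) * (Real.Gamma (α - q/2) / Real.Gamma α) *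
        ∫ k : EuclideanSpace ℝ (Fin p) × EuclideanSpace ℝ (Fin q),
          ‖F k‖ ^ 2 * (2 * π * Real.sqrt (‖k.1‖ ^ 2 + ‖k.2‖ ^ 2)) ^ (2 * α) :=
  fourier_trace_inequality_codim_general p q α hα1 F hF hint
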